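/- arXiv:1507.03935 — 3 statements merged into one kernel-verified Lean document; each statement's English description precedes it below -/
import Mathlib

section
/- Let W be a Whitney covering of an open set Ω ⊊ ℝ^d, let η ∈ (0, d), r > 0, g ∈ L^1_loc(Ω) nonnegative, and Q ∈ W. Then ∑_{S ∈ W, D(Q,S) < r} ∫_S g(y) dy / D(Q,S)^{d-η} ≤ C(d,η) · r^η · inf_{y∈Q} Mg(y), where M is the Hardy–Littlewood maximal operator and D(Q,S) = ℓ(Q) + dist(Q,S) + ℓ(S). -/
open MeasureTheory ENNReal

/-- A cube in `ℝ^d` (with the sup norm) with given center and side length. -/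
def cube {d : ℕ} (c : Fin d → ℝ) (l : ℝ) : Set (Fin d → ℝ) := Metric.closedBall c (l / 2)

/-- Distance between two sets. -/
noncomputable def setDist {X : Type*} [PseudoMetricSpace X] (A B : Set X) : ℝ :=
  sInf ((fun p : X × X => dist p.1 p.2) '' A ×ˢ B)

/-- A Whitney covering of an open set `Ω ⊊ ℝ^d` by dyadic cubes, with comparability
constant `CW`. -/
structure Whitney (d : ℕ) (Ω : Set (Fin d → ℝ)) (CW : ℝ) (ι : Type) where
  center : ι → (Fin d → ℝ)
  side : ι → ℝ
  side_pos : ∀ i, 0 < side i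
  dyadic : ∀ i, ∃ k : ℤ, side i = 2 ^ k
  cnt : Countable ι
  disj : Pairwise (fun i j : ι =>
    Disjoint (interior (cube (center i) (side i))) (interior (cube (center j) (side j))))
  covers : (⋃ i, cube (center i) (side i)) = Ω
  dist_lower : ∀ i, ∀ x ∈ cube (center i) (side i),
    CW * side i ≤ Metric.infDist x (frontier Ω)
  dist_upper : ∀ i, ∃ x ∈ cube (center i) (side i),
    Metric.infDist x (frontier Ω) ≤ 4 * CW * side i

/-- The long distance `D(Q,S) = ℓ(Q) + dist(Q,S) + ℓ(S)` between Whitney cubes. -/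
noncomputable def longDist {d : ℕ} {Ω : Set (Fin d → ℝ)} {CW : ℝ} {ι : Type}
    (W : Whitney d Ω CW ι) (i j : ι) : ℝ :=
  W.side i + setDist (cube (W.center i) (W.side i)) (cube (W.center j) (W.side j)) + W.side j

/-- The non-centered Hardy–Littlewood maximal function (over balls). -/
noncomputable def maximal {d : ℕ} (g : (Fin d → ℝ) → ℝ) (x : Fin d → ℝ) : ℝ≥0∞ :=
  ⨆ (z : Fin d → ℝ) (r : ℝ) (_ : x ∈ Metric.ball z r),
    (∫⁻ y in Metric.ball z r, ENNReal.ofReal (g y)) / volume (Metric.ball z r)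

/-!
The Whitney cubes `S` with `D(Q,S) ≤ t` are a.e. disjoint and lie in the ball `B(c_Q, t)`, which
also contains `Q`; so for every `y ∈ Q` their integrals of `g` add up to at most
`|B(c_Q, t)| · Mg(y) = (2t)^d · Mg(y)`. Choosing `k` with `r 2^{-k-1} < D ≤ r 2^{-k}` gives the
dyadic bound `D^{η-d} ≤ 2^{d-η} ∑_{k : D ≤ r 2^{-k}} (r 2^{-k})^{η-d}`; exchanging the two sums,
the `k`-th scale contributes at most `(r 2^{-k})^{η-d} (2 r 2^{-k})^d Mg(y) = 2^d r^η 2^{-kη} Mg(y)`,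
a geometric series because `η > 0`.
-/

open Metric

lemma setDist_nonneg {X : Type*} [PseudoMetricSpace X] (A B : Set X) : 0 ≤ setDist A B :=
  Real.sInf_nonneg <| by
    rintro _ ⟨p, -, rfl⟩
    exact dist_nonneg

lemma dist_le_setDist_add {X : Type*} [PseudoMetricSpace X] {A B : Set X}
    (hA : A.Nonempty) (hB : B.Nonempty) {a b : X} {ra rb : ℝ}
    (hAa : A ⊆ closedBall a ra) (hBb : B ⊆ closedBall b rb) :
    dist a b ≤ setDist A B + ra + rb := by
  suffices dist a b - ra - rb ≤ setDist A B by linarith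
  refine le_csInf ((hA.prod hB).image _) ?_
  rintro _ ⟨⟨p, q⟩, ⟨hp, hq⟩, rfl⟩
  have hap : dist a p ≤ ra := mem_closedBall'.1 (hAa hp)
  have hqb : dist q b ≤ rb := mem_closedBall.1 (hBb hq)
  linarith [dist_triangle4 a p q b]

lemma cube_ae_eq_interior {d : ℕ} (c : Fin d → ℝ) (l : ℝ) :
    cube c l =ᵐ[volume] interior (cube c l) :=
  (interior_ae_eq_of_null_frontier ((convex_closedBall c _).addHaar_frontier volume)).symm

lemma lintegral_ball_le_volume_mul_maximal {d : ℕ} (g : (Fin d → ℝ) → ℝ)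
    {z y : Fin d → ℝ} {ρ : ℝ} (hy : y ∈ ball z ρ) :
    ∫⁻ x in ball z ρ, ENNReal.ofReal (g x) ≤ volume (ball z ρ) * maximal g y := by
  have hpos : volume (ball z ρ) ≠ 0 := (measure_ball_pos volume z (pos_of_mem_ball hy)).ne'
  have hfin : volume (ball z ρ) ≠ ⊤ := measure_ball_lt_top.ne
  rw [mul_comm, ← ENNReal.div_le_iff hpos hfin]
  exact le_iSup₂_of_le z ρ (le_iSup_of_le hy le_rfl)

lemma tsum_setLIntegral_le_volume_mul_maximal {d : ℕ} {κ : Type*} [Countable κ]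
    (g : (Fin d → ℝ) → ℝ) {s : κ → Set (Fin d → ℝ)} (hs : ∀ j, NullMeasurableSet (s j))
    (hdisj : Pairwise (Function.onFun (AEDisjoint volume) s)) {z y : Fin d → ℝ} {ρ : ℝ}
    (hsub : ∀ j, s j ⊆ ball z ρ) (hy : y ∈ ball z ρ) :
    ∑' j, ∫⁻ x in s j, ENNReal.ofReal (g x) ≤ volume (ball z ρ) * maximal g y :=
  calc ∑' j, ∫⁻ x in s j, ENNReal.ofReal (g x)
      = ∫⁻ x in ⋃ j, s j, ENNReal.ofReal (g x) := (lintegral_iUnion₀ hs hdisj _).symm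
    _ ≤ ∫⁻ x in ball z ρ, ENNReal.ofReal (g x) := lintegral_mono_set (Set.iUnion_subset hsub)
    _ ≤ volume (ball z ρ) * maximal g y := lintegral_ball_le_volume_mul_maximal g hy

lemma rpow_neg_le_two_rpow_mul_tsum_dyadic {D r s : ℝ} (hD : 0 < D) (hDr : D ≤ r) (hs : 0 ≤ s) :
    ENNReal.ofReal (D ^ (-s)) ≤ ENNReal.ofReal (2 ^ s) *
      ∑' k : ℕ, if D ≤ r / 2 ^ k then ENNReal.ofReal ((r / 2 ^ k) ^ (-s)) else 0 := by
  have hr : 0 < r := hD.trans_le hDr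
  obtain ⟨K, hK, hK1⟩ := exists_nat_pow_near ((one_le_div hD).2 hDr) one_lt_two
  have hupper : D ≤ r / 2 ^ K := by rwa [le_div_iff₀ hD, ← le_div_iff₀' (by positivity)] at hK
  have hlower : r / 2 ^ (K + 1) ≤ D := by
    rw [div_lt_iff₀ hD, ← div_lt_iff₀' (by positivity)] at hK1; exact hK1.le
  have hscale : (r / 2 ^ (K + 1)) ^ (-s) = 2 ^ s * (r / 2 ^ K) ^ (-s) := by
    rw [pow_succ, ← div_div, Real.div_rpow (by positivity) zero_le_two, Real.rpow_neg zero_le_two]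
    field_simp
  calc ENNReal.ofReal (D ^ (-s))
      ≤ ENNReal.ofReal (2 ^ s * (r / 2 ^ K) ^ (-s)) := ENNReal.ofReal_le_ofReal
        (hscale ▸ Real.rpow_le_rpow_of_nonpos (by positivity) hlower (neg_nonpos.2 hs))
    _ = ENNReal.ofReal (2 ^ s) * ENNReal.ofReal ((r / 2 ^ K) ^ (-s)) :=
        ENNReal.ofReal_mul (Real.rpow_nonneg zero_le_two _)
    _ ≤ _ := by
        gcongr
        exact (if_pos hupper).symm.le.trans (ENNReal.le_tsum (f := fun k : ℕ =>
          if D ≤ r / 2 ^ k then ENNReal.ofReal ((r / 2 ^ k) ^ (-s)) else 0) K)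

lemma rpow_neg_sub_mul_two_mul_pow {r : ℝ} (hr : 0 < r) (d : ℕ) (η : ℝ) (k : ℕ) :
    (r / 2 ^ k) ^ (-((d : ℝ) - η)) * (2 * (r / 2 ^ k)) ^ d
      = 2 ^ d * r ^ η * ((2 : ℝ) ^ (-η)) ^ k := by
  have ht : 0 < r / 2 ^ k := by positivity
  have hgeom : ((2 : ℝ) ^ (-η)) ^ k = ((2 : ℝ) ^ k)⁻¹ ^ η := by
    rw [← Real.rpow_natCast, ← Real.rpow_mul zero_le_two, Real.inv_rpow (by positivity),
      ← Real.rpow_neg (by positivity), ← Real.rpow_natCast, ← Real.rpow_mul zero_le_two]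
    ring_nf
  rw [mul_pow, ← Real.rpow_natCast (r / 2 ^ k), hgeom, mul_assoc (2 ^ d : ℝ),
    ← Real.mul_rpow hr.le (by positivity), ← div_eq_mul_inv, mul_left_comm, ← Real.rpow_add ht]
  ring_nf

noncomputable def whitneyPotentialConst (d : ℕ) (η : ℝ) : ℝ :=
  2 ^ ((d : ℝ) - η) * 2 ^ d * (1 - 2 ^ (-η))⁻¹

lemma whitneyPotentialConst_pos (d : ℕ) {η : ℝ} (hη : 0 < η) : 0 < whitneyPotentialConst d η := by
  have : (2 : ℝ) ^ (-η) < 1 := Real.rpow_lt_one_of_one_lt_of_neg one_lt_two (neg_neg_of_pos hη)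
  unfold whitneyPotentialConst
  have : 0 < (1 - (2 : ℝ) ^ (-η))⁻¹ := inv_pos.2 (by linarith)
  positivity

namespace Whitney

variable {d : ℕ} {Ω : Set (Fin d → ℝ)} {CW : ℝ} {ι : Type} (W : Whitney d Ω CW ι)

lemma aedisjoint_cube {i j : ι} (hij : i ≠ j) :
    AEDisjoint volume (cube (W.center i) (W.side i)) (cube (W.center j) (W.side j)) :=
  (W.disj hij).aedisjoint.congr (cube_ae_eq_interior _ _) (cube_ae_eq_interior _ _)

lemma side_lt_longDist (i j : ι) : W.side i < longDist W i j := by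
  have := setDist_nonneg (cube (W.center i) (W.side i)) (cube (W.center j) (W.side j))
  unfold longDist
  linarith [W.side_pos j]

lemma cube_subset_ball_of_longDist_le {i j : ι} {t : ℝ} (h : longDist W i j ≤ t) :
    cube (W.center j) (W.side j) ⊆ ball (W.center i) t := by
  have hi := W.side_pos i
  have hj := W.side_pos j
  have hcenters := dist_le_setDist_add
    (⟨_, mem_closedBall_self (by positivity)⟩ : (cube (W.center i) (W.side i)).Nonempty)
    (⟨_, mem_closedBall_self (by positivity)⟩ : (cube (W.center j) (W.side j)).Nonempty)
    subset_rfl subset_rfl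
  intro x hx
  have hxj : dist x (W.center j) ≤ W.side j / 2 := mem_closedBall.1 hx
  unfold longDist at h
  rw [mem_ball]
  linarith [dist_triangle x (W.center j) (W.center i), dist_comm (W.center i) (W.center j)]

lemma tsum_lintegral_cube_le (i : ι) (t : ℝ) (g : (Fin d → ℝ) → ℝ)
    {y : Fin d → ℝ} (hy : y ∈ cube (W.center i) (W.side i)) :
    ∑' j : {j // longDist W i j ≤ t}, ∫⁻ x in cube (W.center j.1) (W.side j.1), ENNReal.ofReal (g x)
      ≤ ENNReal.ofReal ((2 * t) ^ d) * maximal g y := by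
  have := W.cnt
  rcases isEmpty_or_nonempty {j // longDist W i j ≤ t} with _ | ⟨j₀, hj₀⟩
  · simp
  have ht : W.side i < t := (W.side_lt_longDist i j₀).trans_le hj₀
  have hy' : y ∈ ball (W.center i) t :=
    mem_ball.2 ((mem_closedBall.1 hy).trans_lt (by linarith [W.side_pos i]))
  have hvol := Real.volume_pi_ball (W.center i) (pos_of_mem_ball hy')
  rw [Fintype.card_fin] at hvol
  rw [← hvol]
  exact tsum_setLIntegral_le_volume_mul_maximal g (fun _ ↦ measurableSet_closedBall.nullMeasurableSet)
    (fun j k hjk ↦ W.aedisjoint_cube (Subtype.val_injective.ne hjk))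
    (fun j ↦ W.cube_subset_ball_of_longDist_le j.2) hy'

lemma tsum_ite_lintegral_cube_le (i : ι) (J : Set ι) (t : ℝ) (g : (Fin d → ℝ) → ℝ)
    {y : Fin d → ℝ} (hy : y ∈ cube (W.center i) (W.side i)) :
    ∑' j : J, (if longDist W i j ≤ t then
        ∫⁻ x in cube (W.center j.1) (W.side j.1), ENNReal.ofReal (g x) else 0)
      ≤ ENNReal.ofReal ((2 * t) ^ d) * maximal g y := by
  set F : ι → ℝ≥0∞ := fun j ↦ ∫⁻ x in cube (W.center j) (W.side j), ENNReal.ofReal (g x)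
  calc ∑' j : J, (if longDist W i j ≤ t then F j else 0)
      ≤ ∑' j, if longDist W i j ≤ t then F j else 0 :=
        ENNReal.tsum_comp_le_tsum_of_injective Subtype.val_injective _
    _ = ∑' j : {j // longDist W i j ≤ t}, F j := (tsum_subtype {j | longDist W i j ≤ t} F).symm
    _ ≤ _ := W.tsum_lintegral_cube_le i t g hy

lemma tsum_div_longDist_rpow_le {η : ℝ} (hη0 : 0 < η) (hηd : η < d) (i : ι) {r : ℝ} (hr : 0 < r)
    (g : (Fin d → ℝ) → ℝ) {y : Fin d → ℝ} (hy : y ∈ cube (W.center i) (W.side i)) :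
    ∑' j : {j // longDist W i j < r},
        (∫⁻ x in cube (W.center j.1) (W.side j.1), ENNReal.ofReal (g x))
          / ENNReal.ofReal ((longDist W i j.1) ^ ((d : ℝ) - η))
      ≤ ENNReal.ofReal (whitneyPotentialConst d η * r ^ η) * maximal g y := by
  set D := longDist W i
  set F : ι → ℝ≥0∞ := fun j ↦ ∫⁻ x in cube (W.center j) (W.side j), ENNReal.ofReal (g x)
  set s : ℝ := d - η with hs_def
  set t : ℕ → ℝ := fun k ↦ r / 2 ^ k
  set q : ℝ := 2 ^ (-η) with hq_def
  have hq0 : 0 ≤ q := Real.rpow_nonneg zero_le_two _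
  have hq1 : q < 1 := Real.rpow_lt_one_of_one_lt_of_neg one_lt_two (neg_neg_of_pos hη0)
  calc ∑' j : {j // D j < r}, F j / ENNReal.ofReal (D j ^ s)
      = ∑' j : {j // D j < r}, F j * ENNReal.ofReal (D j ^ (-s)) := by
        refine tsum_congr fun j ↦ ?_
        have hD := (W.side_pos i).trans (W.side_lt_longDist i j)
        rw [Real.rpow_neg hD.le, ENNReal.ofReal_inv_of_pos (by positivity), div_eq_mul_inv]
    _ ≤ ∑' j : {j // D j < r}, F j * (ENNReal.ofReal (2 ^ s) *
          ∑' k, if D j ≤ t k then ENNReal.ofReal (t k ^ (-s)) else 0) := by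
        gcongr with j
        exact rpow_neg_le_two_rpow_mul_tsum_dyadic
          ((W.side_pos i).trans (W.side_lt_longDist i j)) j.2.le (by linarith)
    _ = ENNReal.ofReal (2 ^ s) * ∑' k, ENNReal.ofReal (t k ^ (-s)) *
          ∑' j : {j // D j < r}, if D j ≤ t k then F j else 0 := by
        simp_rw [← ENNReal.tsum_mul_left, mul_ite, mul_zero]
        rw [ENNReal.tsum_comm]
        refine tsum_congr fun k ↦ tsum_congr fun j ↦ ?_
        split_ifs <;> ring
    _ ≤ ENNReal.ofReal (2 ^ s) * ∑' k, ENNReal.ofReal (t k ^ (-s)) *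
          (ENNReal.ofReal ((2 * t k) ^ d) * maximal g y) := by
        gcongr with k
        exact W.tsum_ite_lintegral_cube_le i {j | D j < r} (t k) g hy
    _ = ENNReal.ofReal (2 ^ s) * ∑' k, ENNReal.ofReal (2 ^ d * r ^ η) * maximal g y *
          ENNReal.ofReal q ^ k := by
        refine congrArg _ (tsum_congr fun k ↦ ?_)
        rw [← mul_assoc, ← ENNReal.ofReal_mul (Real.rpow_nonneg (by positivity) _),
          rpow_neg_sub_mul_two_mul_pow hr, ENNReal.ofReal_mul (by positivity),
          ENNReal.ofReal_pow hq0]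
        ring
    _ = ENNReal.ofReal (whitneyPotentialConst d η * r ^ η) * maximal g y := by
        rw [ENNReal.tsum_mul_left, ENNReal.tsum_geometric, ← ENNReal.ofReal_one,
          ← ENNReal.ofReal_sub _ hq0, ← ENNReal.ofReal_inv_of_pos (by linarith),
          whitneyPotentialConst, ← hs_def, ← hq_def]
        rw [ENNReal.ofReal_mul (by positivity), ENNReal.ofReal_mul (by positivity),
          ENNReal.ofReal_mul (by positivity), ENNReal.ofReal_mul (by positivity)]
        ring

end Whitney

theorem stmt8_general (d : ℕ) (η : ℝ) (hη0 : 0 < η) (hηd : η < d) :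
    ∃ C : ℝ, 0 < C ∧
      ∀ (CW : ℝ), 1 ≤ CW →
      ∀ (Ω : Set (Fin d → ℝ)), IsOpen Ω → Ω ≠ Set.univ →
      ∀ (ι : Type) (W : Whitney d Ω CW ι) (i : ι) (r : ℝ), 0 < r →
      ∀ (g : (Fin d → ℝ) → ℝ), (∀ x, 0 ≤ g x) → LocallyIntegrable g volume →
        (∑' j : {j : ι // longDist W i j < r},
            (∫⁻ y in cube (W.center j.1) (W.side j.1), ENNReal.ofReal (g y))
              / ENNReal.ofReal ((longDist W i j.1) ^ ((d : ℝ) - η)))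
          ≤ ENNReal.ofReal (C * r ^ η) *
              ⨅ (y : Fin d → ℝ) (_ : y ∈ cube (W.center i) (W.side i)), maximal g y := by
  refine ⟨whitneyPotentialConst d η, whitneyPotentialConst_pos d hη0, ?_⟩
  intro CW _ Ω _ _ ι W i r hr g _ _
  have hK : ENNReal.ofReal (whitneyPotentialConst d η * r ^ η) ≠ 0 :=
    (ENNReal.ofReal_pos.2 (mul_pos (whitneyPotentialConst_pos d hη0) (by positivity))).ne'
  rw [ENNReal.mul_iInf_of_ne hK ENNReal.ofReal_ne_top]
  refine le_iInf fun y ↦ ?_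
  rw [ENNReal.mul_iInf_of_ne hK ENNReal.ofReal_ne_top]
  exact le_iInf fun hy ↦ W.tsum_div_longDist_rpow_le hη0 hηd i hr g hy

/-- for a Whitney covering `W` of an open `Ω ⊊ ℝ^d`, `0 < η < d`, `r > 0`,
`g ≥ 0` locally integrable on `Ω` and `Q ∈ W`:
`∑_{S : D(Q,S) < r} (∫_S g) / D(Q,S)^{d-η} ≤ C(d,η) · r^η · inf_{y ∈ Q} Mg(y)`. -/
theorem stmt8 (d : ℕ) (hd : 0 < d) (η : ℝ) (hη0 : 0 < η) (hηd : η < d) :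
    ∃ C : ℝ, 0 < C ∧
      ∀ (CW : ℝ), 1 ≤ CW →
      ∀ (Ω : Set (Fin d → ℝ)), IsOpen Ω → Ω ≠ Set.univ →
      ∀ (ι : Type) (W : Whitney d Ω CW ι) (i : ι) (r : ℝ), 0 < r →
      ∀ (g : (Fin d → ℝ) → ℝ), (∀ x, 0 ≤ g x) → LocallyIntegrable g volume →
        (∑' j : {j : ι // longDist W i j < r},
            (∫⁻ y in cube (W.center j.1) (W.side j.1), ENNReal.ofReal (g y))
              / ENNReal.ofReal ((longDist W i j.1) ^ ((d : ℝ) - η)))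
          ≤ ENNReal.ofReal (C * r ^ η) *
              ⨅ (y : Fin d → ℝ) (_ : y ∈ cube (W.center i) (W.side i)), maximal g y :=
  stmt8_general d η hη0 hηd
end

section
/- Let Ω be an ε-uniform domain with Whitney covering W, let s > 0, and Q ∈ W. Then ∑_{L ∈ W : Q ∈ SH(L)} ℓ(L)^{-s} ≤ C(d,ε,s) · ℓ(Q)^{-s}, where SH(L) denotes the ρ_ε-shadow of L, i.e. the set of Whitney cubes contained in the ball B(x_L, ρ_ε ℓ(L)) centered at the center of L. -/
/-! If `Q` lies in the shadow of `L`, the Whitney distance bounds give `ℓ(Q) ≤ (ρ + 5) ℓ(L)`, so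
the side lengths `2^k` of such cubes `L` are bounded below by `2^(k_Q - m)` with `2^m > ρ + 5`.
At each fixed side length, the cubes `L` have disjoint interiors (balls of radius `ℓ(L)/2` in the
sup norm) with centres within `ρ ℓ(L)` of the centre of `Q`, so a volume comparison leaves at
most `(2ρ + 1)^d` of them. The sum is therefore dominated by a geometric series in `2^(-s)`
starting at the scale `2^(k_Q - m)`. -/

open MeasureTheory ENNReal

/-- The cube `Q` belongs to the `ρ`-shadow of `L`, i.e. `Q ⊂ B(x_L, ρ·ℓ(L))`. -/
def inShadow {d : ℕ} {Ω : Set (Fin d → ℝ)} {CW : ℝ} {ι : Type}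
    (W : Whitney d Ω CW ι) (ρ : ℝ) (L Q : ι) : Prop :=
  cube (W.center Q) (W.side Q) ⊆ Metric.ball (W.center L) (ρ * W.side L)

open Metric

theorem ENNReal.tsum_pow_le_of_encard_fiber_le {σ : Type*} (e : σ → ℕ) {N : ℝ≥0∞}
    (hN : ∀ n, ({x | e x = n}.encard : ℝ≥0∞) ≤ N) (r : ℝ≥0∞) :
    ∑' x, r ^ e x ≤ N * (1 - r)⁻¹ :=
  calc ∑' x, r ^ e x = ∑' n, ∑' _ : {x | e x = n}, r ^ n := by
        rw [← (Equiv.sigmaFiberEquiv e).tsum_eq, ENNReal.tsum_sigma']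
        exact tsum_congr fun n => tsum_congr fun x => congrArg (r ^ ·) x.2
    _ = ∑' n, ({x | e x = n}.encard : ℝ≥0∞) * r ^ n := by simp only [ENNReal.tsum_set_const]
    _ ≤ ∑' n, N * r ^ n := by gcongr with n; exact hN n
    _ = N * (1 - r)⁻¹ := by rw [ENNReal.tsum_mul_left, ENNReal.tsum_geometric]

theorem encard_le_of_pairwiseDisjoint_ball {d : ℕ} {ι : Type*} {S : Set ι}
    (c : ι → Fin d → ℝ) {x : Fin d → ℝ} {r R : ℝ} (hr : 0 < r) (hR : 0 ≤ R)
    (hS : S.PairwiseDisjoint fun i => ball (c i) r) (hc : ∀ i ∈ S, c i ∈ closedBall x R) :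
    (S.encard : ℝ≥0∞) ≤ ENNReal.ofReal (((R + r) / r) ^ d) := by
  have hcount : S.Countable :=
    hS.countable_of_isOpen (fun _ _ => isOpen_ball) fun i _ => nonempty_ball.2 hr
  have hsub : (⋃ i ∈ S, ball (c i) r) ⊆ closedBall x (R + r) := by
    simp only [Set.iUnion_subset_iff]
    intro i hi y hy
    exact mem_closedBall.2 <| (dist_triangle y (c i) x).trans
      (add_comm r R ▸ add_le_add (mem_ball.1 hy).le (mem_closedBall.1 (hc i hi)))
  have hvol : (S.encard : ℝ≥0∞) * ENNReal.ofReal ((2 * r) ^ d)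
      ≤ ENNReal.ofReal ((2 * (R + r)) ^ d) := by
    calc (S.encard : ℝ≥0∞) * ENNReal.ofReal ((2 * r) ^ d)
        = ∑' i : S, volume (ball (c i) r) := by
          simp only [Real.volume_pi_ball _ hr, Fintype.card_fin, ENNReal.tsum_set_const]
      _ = volume (⋃ i ∈ S, ball (c i) r) :=
          (measure_biUnion hcount hS fun _ _ => measurableSet_ball).symm
      _ ≤ volume (closedBall x (R + r)) := measure_mono hsub
      _ = ENNReal.ofReal ((2 * (R + r)) ^ d) := by
          rw [Real.volume_pi_closedBall _ (by positivity), Fintype.card_fin]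
  rwa [← ENNReal.le_div_iff_mul_le (Or.inl (by simp [hr])) (Or.inl ENNReal.ofReal_ne_top),
    ← ENNReal.ofReal_div_of_pos (by positivity), ← div_pow, mul_div_mul_left _ _ two_ne_zero]
    at hvol

theorem tsum_ofReal_two_zpow_rpow_neg_le {σ : Type*} (k : σ → ℤ) {k₀ : ℤ} (hk : ∀ x, k₀ ≤ k x)
    {N : ℝ} (hN : ∀ j, ({x | k x = j}.encard : ℝ≥0∞) ≤ ENNReal.ofReal N) {s : ℝ} (hs : 0 < s) :
    ∑' x, ENNReal.ofReal (((2 : ℝ) ^ k x) ^ (-s))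
      ≤ ENNReal.ofReal (N * (1 - 2 ^ (-s))⁻¹ * ((2 : ℝ) ^ k₀) ^ (-s)) := by
  set r : ℝ := 2 ^ (-s)
  have hr0 : 0 ≤ r := by positivity
  have hr1 : r < 1 := Real.rpow_lt_one_of_one_lt_of_neg (by norm_num) (neg_neg_of_pos hs)
  have hterm : ∀ x, ENNReal.ofReal (((2 : ℝ) ^ k x) ^ (-s))
      = ENNReal.ofReal (((2 : ℝ) ^ k₀) ^ (-s)) * ENNReal.ofReal r ^ (k x - k₀).toNat := by
    intro x
    obtain ⟨n, hn⟩ := Int.le.dest (hk x)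
    rw [← hn, add_sub_cancel_left, Int.toNat_natCast, ← ENNReal.ofReal_pow hr0,
      ← ENNReal.ofReal_mul (by positivity), zpow_add₀ two_ne_zero, zpow_natCast,
      Real.mul_rpow (by positivity) (by positivity), Real.rpow_pow_comm zero_le_two]
  have hfiber : ∀ n, ({x | (k x - k₀).toNat = n}.encard : ℝ≥0∞) ≤ ENNReal.ofReal N := fun n =>
    le_trans (by gcongr with x hx; have := hk x; omega) (hN (k₀ + n))
  calc ∑' x, ENNReal.ofReal (((2 : ℝ) ^ k x) ^ (-s))
      = ENNReal.ofReal (((2 : ℝ) ^ k₀) ^ (-s)) * ∑' x, ENNReal.ofReal r ^ (k x - k₀).toNat := by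
        simp only [hterm, ENNReal.tsum_mul_left]
    _ ≤ ENNReal.ofReal (((2 : ℝ) ^ k₀) ^ (-s))
          * (ENNReal.ofReal N * (1 - ENNReal.ofReal r)⁻¹) := by
        gcongr
        exact ENNReal.tsum_pow_le_of_encard_fiber_le _ hfiber _
    _ = ENNReal.ofReal (N * (1 - r)⁻¹ * ((2 : ℝ) ^ k₀) ^ (-s)) := by
        rw [← ENNReal.ofReal_one, ← ENNReal.ofReal_sub _ hr0,
          ← ENNReal.ofReal_inv_of_pos (sub_pos.2 hr1),
          ← ENNReal.ofReal_mul' (inv_nonneg.2 (sub_pos.2 hr1).le),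
          ← ENNReal.ofReal_mul (by positivity), mul_comm]

namespace Whitney

variable {d : ℕ} {Ω : Set (Fin d → ℝ)} {CW : ℝ} {ι : Type} (W : Whitney d Ω CW ι)

theorem center_mem_cube (i : ι) : W.center i ∈ cube (W.center i) (W.side i) :=
  mem_closedBall_self (half_pos (W.side_pos i)).le

theorem interior_cube (i : ι) :
    interior (cube (W.center i) (W.side i)) = ball (W.center i) (W.side i / 2) :=
  interior_closedBall _ (half_pos (W.side_pos i)).ne'

theorem side_le_of_inShadow (hCW : 1 ≤ CW) {ρ : ℝ} {L Q : ι} (h : inShadow W ρ L Q) :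
    W.side Q ≤ (ρ + 5) * W.side L := by
  obtain ⟨x, hx, hxΩ⟩ := W.dist_upper L
  have hQL : dist (W.center Q) (W.center L) < ρ * W.side L := h (W.center_mem_cube Q)
  have hLx : dist (W.center L) x ≤ W.side L / 2 := by rw [dist_comm]; exact hx
  have hρL : 0 < ρ * W.side L := dist_nonneg.trans_lt hQL
  have hL := W.side_pos L
  have key : CW * W.side Q ≤ 4 * CW * W.side L + (ρ * W.side L + W.side L / 2) :=
    calc CW * W.side Q ≤ infDist (W.center Q) (frontier Ω) :=
          W.dist_lower Q _ (W.center_mem_cube Q)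
      _ ≤ infDist x (frontier Ω) + dist (W.center Q) x := infDist_le_infDist_add_dist
      _ ≤ 4 * CW * W.side L + (ρ * W.side L + W.side L / 2) :=
        add_le_add hxΩ ((dist_triangle _ _ _).trans (add_le_add hQL.le hLx))
  have hCW0 : 0 < CW := one_pos.trans_le hCW
  refine le_of_mul_le_mul_left (key.trans ?_) hCW0
  nlinarith

theorem encard_inShadow_side_eq_le {ρ : ℝ} (hρ : 0 ≤ ρ) (Q : ι) {a : ℝ} (ha : 0 < a) :
    ({L : {L // inShadow W ρ L Q} | W.side L = a}.encard : ℝ≥0∞)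
      ≤ ENNReal.ofReal ((2 * ρ + 1) ^ d) := by
  have hdisj : {L : {L // inShadow W ρ L Q} | W.side L = a}.PairwiseDisjoint
      fun L => ball (W.center L) (a / 2) := by
    rintro L hL L' hL' hne
    have h : Disjoint _ _ := W.disj (Subtype.val_injective.ne hne)
    rwa [interior_cube, interior_cube, hL, hL'] at h
  have hcenter : ∀ L ∈ {L : {L // inShadow W ρ L Q} | W.side L = a},
      W.center L ∈ closedBall (W.center Q) (ρ * a) := by
    rintro ⟨L, hL⟩ rfl
    rw [mem_closedBall_comm]
    exact ball_subset_closedBall (hL (W.center_mem_cube Q))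
  convert encard_le_of_pairwiseDisjoint_ball _ (half_pos ha) (by positivity) hdisj hcenter
    using 3
  field_simp

end Whitney

theorem stmt11_general (d : ℕ) (ρ s CW : ℝ) (hρ : 1 < ρ) (hs : 0 < s) (hCW : 1 ≤ CW) :
    ∃ C : ℝ, 0 < C ∧
      ∀ (Ω : Set (Fin d → ℝ)), IsOpen Ω → Ω ≠ Set.univ →
      ∀ (ι : Type) (W : Whitney d Ω CW ι) (Q : ι),
        (∑' L : {L : ι // inShadow W ρ L Q}, ENNReal.ofReal (W.side L.1 ^ (-s)))
          ≤ ENNReal.ofReal (C * W.side Q ^ (-s)) := by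
  obtain ⟨m, hm⟩ := pow_unbounded_of_one_lt (ρ + 5) (one_lt_two (α := ℝ))
  have hr1 : (2 : ℝ) ^ (-s) < 1 :=
    Real.rpow_lt_one_of_one_lt_of_neg (by norm_num) (neg_neg_of_pos hs)
  refine ⟨(2 * ρ + 1) ^ d * (1 - 2 ^ (-s))⁻¹ * ((2 : ℝ) ^ m) ^ s,
    by have := sub_pos.2 hr1; positivity, fun Ω _ _ ι W Q => ?_⟩
  choose k hk using W.dyadic
  have hscale : ∀ L : {L // inShadow W ρ L Q}, k Q - m ≤ k L := by
    intro L
    have hlt : (2 : ℝ) ^ k Q < 2 ^ ((m : ℤ) + k L) := by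
      calc (2 : ℝ) ^ k Q = W.side Q := (hk Q).symm
        _ ≤ (ρ + 5) * W.side L := W.side_le_of_inShadow hCW L.2
        _ < 2 ^ m * W.side L := mul_lt_mul_of_pos_right hm (W.side_pos L)
        _ = 2 ^ ((m : ℤ) + k L) := by rw [hk L, zpow_add₀ two_ne_zero, zpow_natCast]
    have := (zpow_lt_zpow_iff_right₀ (by norm_num)).1 hlt
    omega
  have hfiber : ∀ j, ({L : {L // inShadow W ρ L Q} | k L = j}.encard : ℝ≥0∞)
      ≤ ENNReal.ofReal ((2 * ρ + 1) ^ d) := fun j =>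
    le_trans (by gcongr; exact fun hL => hL ▸ hk _)
      (W.encard_inShadow_side_eq_le (by linarith) Q (zpow_pos two_pos j))
  calc (∑' L : {L // inShadow W ρ L Q}, ENNReal.ofReal (W.side L.1 ^ (-s)))
      = ∑' L : {L // inShadow W ρ L Q}, ENNReal.ofReal (((2 : ℝ) ^ k L) ^ (-s)) := by
        simp only [hk]
    _ ≤ _ := tsum_ofReal_two_zpow_rpow_neg_le (fun L : {L // inShadow W ρ L Q} => k L)
        hscale hfiber hs
    _ = _ := by
        rw [hk Q, zpow_sub₀ two_ne_zero, zpow_natCast,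
          Real.div_rpow (by positivity) (by positivity), Real.rpow_neg (pow_nonneg zero_le_two m),
          div_inv_eq_mul, mul_comm (((2 : ℝ) ^ k Q) ^ (-s)), ← mul_assoc]

/-- for a Whitney covering of an open set, `s > 0` and a cube `Q`,
`∑_{L : Q ∈ SH(L)} ℓ(L)^{-s} ≤ C · ℓ(Q)^{-s}`, the constant depending only on `d`, the
shadow ratio `ρ`, `s` and the Whitney constant. -/
theorem stmt11 (d : ℕ) (hd : 0 < d) (ρ s CW : ℝ) (hρ : 1 < ρ) (hs : 0 < s) (hCW : 1 ≤ CW) :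
    ∃ C : ℝ, 0 < C ∧
      ∀ (Ω : Set (Fin d → ℝ)), IsOpen Ω → Ω ≠ Set.univ →
      ∀ (ι : Type) (W : Whitney d Ω CW ι) (Q : ι),
        (∑' L : {L : ι // inShadow W ρ L Q}, ENNReal.ofReal (W.side L.1 ^ (-s)))
          ≤ ENNReal.ofReal (C * W.side Q ^ (-s)) :=
  stmt11_general d ρ s CW hρ hs hCW
end

section
/- Let Ω ⊂ ℝ^d be a bounded open set with a Whitney covering W, let 1 < p < ∞, 0 < s < 1, 1 ≤ q < ∞, and f ∈ L^1_loc(Ω). Then ∑_{Q ∈ W} ∫_{8Q ∩ Ω} |f(x) - f_Q|^p / ℓ(Q)^{sp} dx ≤ C ∑_{Q ∈ W} ∫_Q (∫_Q |f(x)-f(ξ)|^q / |x-ξ|^{sq+d} dξ)^{p/q} dx + C ∑_{Q∈W} ∫_{(8Q∖Q)∩Ω} (∫_Q |f(x)-f(ξ)|^q/|x-ξ|^{sq+d} dξ)^{p/q} dx, where f_Q denotes the mean of f on Q and C depends on d, s, p, q. -/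
/-!
For a Whitney cube `Q` and `x ∈ 8Q`, Jensen's inequality for the average over `Q` gives
`|f x - f_Q|^q ≤ |Q|⁻¹ ∫_Q |f x - f ξ|^q dξ`. Since `‖x - ξ‖ ≤ 9ℓ(Q)/2` for `ξ ∈ Q`, inserting the
kernel `‖x - ξ‖^{-(sq+d)}` costs a factor `(9ℓ(Q)/2)^{sq+d}`, and with `|Q| = ℓ(Q)^d` this leaves
`|f x - f_Q|^q / ℓ(Q)^{sq} ≤ (9/2)^{sq+d} ∫_Q |f x - f ξ|^q / ‖x - ξ‖^{sq+d} dξ`.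
Raising this to the power `p/q`, integrating over `8Q ∩ Ω ⊆ Q ∪ ((8Q \ Q) ∩ Ω)` and summing over
the cubes gives the claim with `C = (9/2)^{(sq+d)p/q}`.
-/

open MeasureTheory ENNReal

open MeasureTheory

section Average

variable {α : Type*} [MeasurableSpace α] {μ : Measure α} {s : Set α}

theorem lintegral_enorm_le_rpow_mul_measure {g : α → ℝ} {q : ℝ} (hq : 1 ≤ q)
    (hg : AEStronglyMeasurable g (μ.restrict s)) :
    ∫⁻ x in s, ‖g x‖ₑ ∂μ ≤ (∫⁻ x in s, ‖g x‖ₑ ^ q ∂μ) ^ (1 / q) * μ s ^ (1 - 1 / q) := by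
  have h := eLpNorm'_le_eLpNorm'_mul_rpow_measure_univ one_pos hq hg
  simpa [eLpNorm'_eq_lintegral_enorm] using h

theorem enorm_setAverage_rpow_le {g : α → ℝ} {q : ℝ} (hq : 1 ≤ q) (hs0 : μ s ≠ 0)
    (hs : μ s ≠ ∞) (hg : AEStronglyMeasurable g (μ.restrict s)) :
    ‖⨍ x in s, g x ∂μ‖ₑ ^ q ≤ (μ s)⁻¹ * ∫⁻ x in s, ‖g x‖ₑ ^ q ∂μ := by
  have hq0 : 0 < q := zero_lt_one.trans_le hq
  have havg : ‖⨍ x in s, g x ∂μ‖ₑ ≤ (μ s)⁻¹ * ∫⁻ x in s, ‖g x‖ₑ ∂μ := by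
    rw [setAverage_eq, enorm_smul, measureReal_def, Real.enorm_eq_ofReal_abs,
      abs_inv, abs_of_nonneg ENNReal.toReal_nonneg, ENNReal.ofReal_inv_of_pos
        (ENNReal.toReal_pos hs0 hs), ENNReal.ofReal_toReal hs]
    gcongr
    exact enorm_integral_le_lintegral_enorm _
  calc ‖⨍ x in s, g x ∂μ‖ₑ ^ q
      ≤ ((μ s)⁻¹ * ((∫⁻ x in s, ‖g x‖ₑ ^ q ∂μ) ^ (1 / q) * μ s ^ (1 - 1 / q))) ^ q := by
        gcongr
        exact havg.trans (by gcongr; exact lintegral_enorm_le_rpow_mul_measure hq hg)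
    _ = (μ s)⁻¹ * ∫⁻ x in s, ‖g x‖ₑ ^ q ∂μ := by
        rw [mul_comm (_ ^ (1 / q)), ← mul_assoc, ← ENNReal.rpow_neg_one,
          ← ENNReal.rpow_add _ _ hs0 hs, ENNReal.mul_rpow_of_nonneg _ _ hq0.le,
          ← ENNReal.rpow_mul, ← ENNReal.rpow_mul]
        congr 2
        · field_simp; ring
        · field_simp; simp

theorem sub_setAverage_eq {f : α → ℝ} (a : ℝ) (hs0 : μ s ≠ 0) (hs : μ s ≠ ∞)
    (hf : IntegrableOn f s μ) :
    a - ⨍ x in s, f x ∂μ = ⨍ x in s, (a - f x) ∂μ := by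
  have : IsFiniteMeasure (μ.restrict s) := isFiniteMeasure_restrict.mpr hs
  have hs' : μ.real s ≠ 0 := (ENNReal.toReal_pos hs0 hs).ne'
  rw [setAverage_eq, setAverage_eq, integral_sub (integrable_const a) hf, setIntegral_const,
    smul_sub, smul_smul, inv_mul_cancel₀ hs', one_smul]

end Average

theorem volume_cube {d : ℕ} (c : Fin d → ℝ) {L : ℝ} (hL : 0 ≤ L) :
    volume (cube c L) = ENNReal.ofReal (L ^ d) := by
  rw [cube, Real.volume_pi_closedBall c (by positivity), Fintype.card_fin]
  congr 1
  ring

theorem norm_sub_le_of_mem_cube {d : ℕ} {c x y : Fin d → ℝ} {L L' : ℝ} (hx : x ∈ cube c L)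
    (hy : y ∈ cube c L') : ‖x - y‖ ≤ (L + L') / 2 := by
  rw [← dist_eq_norm]
  calc dist x y ≤ dist x c + dist y c := dist_triangle_right x y c
    _ ≤ L / 2 + L' / 2 := add_le_add hx hy
    _ = (L + L') / 2 := by ring

theorem lintegral_rpow_le_mul_lintegral_kernel {E : Type*} [NormedAddCommGroup E]
    [MeasurableSpace E] {μ : Measure E} {A : Set E} (hA : MeasurableSet A) (f : E → ℝ)
    {x : E} {q t R : ℝ} (hq : 0 < q) (ht : 0 ≤ t) (hR : ∀ ξ ∈ A, ‖x - ξ‖ ≤ R) :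
    ∫⁻ ξ in A, ENNReal.ofReal (|f x - f ξ| ^ q) ∂μ ≤
      ENNReal.ofReal (R ^ t) * ∫⁻ ξ in A, ENNReal.ofReal (|f x - f ξ| ^ q / ‖x - ξ‖ ^ t) ∂μ := by
  rw [← lintegral_const_mul' _ _ ENNReal.ofReal_ne_top]
  refine setLIntegral_mono' hA fun ξ hξ => ?_
  have hR0 : 0 ≤ R := (norm_nonneg _).trans (hR ξ hξ)
  rw [← ENNReal.ofReal_mul (by positivity)]
  refine ENNReal.ofReal_le_ofReal ?_
  rcases eq_or_ne x ξ with rfl | hxξ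
  · simp [Real.zero_rpow hq.ne']
  · have hnorm : 0 < ‖x - ξ‖ := norm_pos_iff.mpr (sub_ne_zero.mpr hxξ)
    calc |f x - f ξ| ^ q = ‖x - ξ‖ ^ t * (|f x - f ξ| ^ q / ‖x - ξ‖ ^ t) := by field_simp
      _ ≤ R ^ t * (|f x - f ξ| ^ q / ‖x - ξ‖ ^ t) := by gcongr; exact hR ξ hξ

theorem ofReal_rpow_div_rpow_eq {a b p q : ℝ} (ha : 0 ≤ a) (hb : 0 ≤ b) (hp : 0 ≤ p)
    (hq : 0 < q) :
    ENNReal.ofReal (a ^ p / b ^ p) = ENNReal.ofReal (a ^ q / b ^ q) ^ (p / q) := by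
  rw [ENNReal.ofReal_rpow_of_nonneg (by positivity) (by positivity), ← Real.div_rpow ha hb,
    ← Real.div_rpow ha hb, ← Real.rpow_mul (div_nonneg ha hb), mul_div_cancel₀ p hq.ne']

section Cube

variable {d : ℕ} {p q s L : ℝ} {c x : Fin d → ℝ} {f : (Fin d → ℝ) → ℝ}

theorem ofReal_sub_setAverage_rpow_div_le_lintegral (hq : 1 ≤ q) (hs : 0 ≤ s) (hL : 0 < L)
    (hf : IntegrableOn f (cube c L)) (hx : x ∈ cube c (8 * L)) :
    ENNReal.ofReal (|f x - ⨍ ξ in cube c L, f ξ| ^ q / L ^ (s * q)) ≤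
      ENNReal.ofReal ((9 / 2) ^ (s * q + d)) *
        ∫⁻ ξ in cube c L, ENNReal.ofReal (|f x - f ξ| ^ q / ‖x - ξ‖ ^ (s * q + d)) := by
  have hq0 : 0 < q := zero_lt_one.trans_le hq
  have hvol := volume_cube c hL.le
  have hvol0 : volume (cube c L) ≠ 0 := by rw [hvol]; simpa using pow_pos hL d
  have hvolTop : volume (cube c L) ≠ ∞ := by rw [hvol]; exact ENNReal.ofReal_ne_top
  have jensen : ENNReal.ofReal (|f x - ⨍ ξ in cube c L, f ξ| ^ q) ≤
      (volume (cube c L))⁻¹ * ∫⁻ ξ in cube c L, ENNReal.ofReal (|f x - f ξ| ^ q) := by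
    rw [sub_setAverage_eq _ hvol0 hvolTop hf]
    simpa [Real.enorm_eq_ofReal_abs, ENNReal.ofReal_rpow_of_nonneg, hq0.le] using
      enorm_setAverage_rpow_le hq hvol0 hvolTop ((integrableOn_const hvolTop).sub hf).1
  have kernel := lintegral_rpow_le_mul_lintegral_kernel (μ := volume)
    (A := cube c L) Metric.isClosed_closedBall.measurableSet f hq0 (by positivity : 0 ≤ s * q + d)
    fun ξ hξ => norm_sub_le_of_mem_cube hx hξ
  rw [ENNReal.ofReal_div_of_pos (by positivity), ENNReal.div_le_iff
    (ENNReal.ofReal_pos.mpr (by positivity)).ne' ENNReal.ofReal_ne_top]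
  set I := ∫⁻ ξ in cube c L, ENNReal.ofReal (|f x - f ξ| ^ q / ‖x - ξ‖ ^ (s * q + d))
  calc _ ≤ _ := jensen
    _ ≤ (volume (cube c L))⁻¹ * (ENNReal.ofReal (((8 * L + L) / 2) ^ (s * q + d)) * I) := by
        gcongr
    _ = ENNReal.ofReal ((9 / 2) ^ (s * q + d)) * I * ENNReal.ofReal (L ^ (s * q)) := by
      have scale :
          (L ^ d)⁻¹ * ((8 * L + L) / 2) ^ (s * q + d) = (9 / 2) ^ (s * q + d) * L ^ (s * q) := by
        rw [show (8 * L + L) / 2 = 9 / 2 * L by ring, Real.mul_rpow (by norm_num) hL.le,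
          Real.rpow_add hL, Real.rpow_natCast]
        field_simp
      rw [hvol, ← mul_assoc, ← ENNReal.ofReal_inv_of_pos (by positivity),
        ← ENNReal.ofReal_mul (by positivity), scale, ENNReal.ofReal_mul (by positivity),
        mul_right_comm]

theorem ofReal_sub_setAverage_rpow_div_le_lintegral_rpow (hp : 0 ≤ p) (hq : 1 ≤ q) (hs : 0 ≤ s)
    (hL : 0 < L) (hf : IntegrableOn f (cube c L)) (hx : x ∈ cube c (8 * L)) :
    ENNReal.ofReal (|f x - ⨍ ξ in cube c L, f ξ| ^ p / L ^ (s * p)) ≤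
      ENNReal.ofReal ((9 / 2) ^ ((s * q + d) * (p / q))) *
        (∫⁻ ξ in cube c L,
          ENNReal.ofReal (|f x - f ξ| ^ q / ‖x - ξ‖ ^ (s * q + d))) ^ (p / q) := by
  have hq0 : 0 < q := zero_lt_one.trans_le hq
  rw [Real.rpow_mul hL.le s p, ofReal_rpow_div_rpow_eq (abs_nonneg _) (by positivity) hp hq0,
    ← Real.rpow_mul hL.le s q, Real.rpow_mul (by norm_num : (0 : ℝ) ≤ 9 / 2),
    ← ENNReal.ofReal_rpow_of_nonneg (by positivity) (by positivity),
    ← ENNReal.mul_rpow_of_nonneg _ _ (by positivity)]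
  gcongr
  exact ofReal_sub_setAverage_rpow_div_le_lintegral hq hs hL hf hx

end Cube

theorem setLIntegral_inter_le_mul_add {α : Type*} [MeasurableSpace α] {μ : Measure α}
    {F G : α → ℝ≥0∞} {C : ℝ≥0∞} {A B Ω : Set α} (hC : C ≠ ∞) (hAΩ : MeasurableSet (A ∩ Ω))
    (hFG : ∀ x ∈ A, F x ≤ C * G x) :
    ∫⁻ x in A ∩ Ω, F x ∂μ ≤ C * (∫⁻ x in B, G x ∂μ + ∫⁻ x in (A \ B) ∩ Ω, G x ∂μ) := by
  have hsplit : A ∩ Ω ⊆ B ∪ (A \ B) ∩ Ω := fun x hx => by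
    by_cases hxB : x ∈ B
    · exact Or.inl hxB
    · exact Or.inr ⟨⟨hx.1, hxB⟩, hx.2⟩
  calc ∫⁻ x in A ∩ Ω, F x ∂μ ≤ ∫⁻ x in A ∩ Ω, C * G x ∂μ :=
        setLIntegral_mono' hAΩ fun x hx => hFG x hx.1
    _ = C * ∫⁻ x in A ∩ Ω, G x ∂μ := lintegral_const_mul' _ _ hC
    _ ≤ C * ∫⁻ x in B ∪ (A \ B) ∩ Ω, G x ∂μ := by gcongr
    _ ≤ C * (∫⁻ x in B, G x ∂μ + ∫⁻ x in (A \ B) ∩ Ω, G x ∂μ) := by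
        gcongr
        exact lintegral_union_le _ _ _

namespace Whitney

variable {d : ℕ} {Ω : Set (Fin d → ℝ)} {CW : ℝ} {ι : Type} (W : Whitney d Ω CW ι)

theorem cube_subset (i : ι) : cube (W.center i) (W.side i) ⊆ Ω :=
  (Set.subset_iUnion (fun j => cube (W.center j) (W.side j)) i).trans W.covers.le

theorem integrableOn_cube {f : (Fin d → ℝ) → ℝ} (hf : LocallyIntegrableOn f Ω volume) (i : ι) :
    IntegrableOn f (cube (W.center i) (W.side i)) volume :=
  hf.integrableOn_compact_subset (W.cube_subset i) (isCompact_closedBall _ _)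

end Whitney

theorem stmt14_general (d : ℕ) (p q s : ℝ) (hp1 : 1 < p) (hq : 1 ≤ q)
    (hs0 : 0 < s) :
    ∃ C : ℝ, 0 < C ∧
      ∀ (CW : ℝ), 1 ≤ CW →
      ∀ (Ω : Set (Fin d → ℝ)), IsOpen Ω → Bornology.IsBounded Ω → Ω ≠ Set.univ →
      ∀ (ι : Type) (W : Whitney d Ω CW ι)
        (f : (Fin d → ℝ) → ℝ), MeasureTheory.LocallyIntegrableOn f Ω volume →
        (∑' Q : ι, ∫⁻ x in (cube (W.center Q) (8 * W.side Q)) ∩ Ω,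
            ENNReal.ofReal
              (|f x - ⨍ ξ in cube (W.center Q) (W.side Q), f ξ| ^ p / W.side Q ^ (s * p)))
          ≤ ENNReal.ofReal C *
            ((∑' Q : ι, ∫⁻ x in cube (W.center Q) (W.side Q),
                (∫⁻ ξ in cube (W.center Q) (W.side Q),
                  ENNReal.ofReal (|f x - f ξ| ^ q / ‖x - ξ‖ ^ (s * q + d))) ^ (p / q))
              + ∑' Q : ι, ∫⁻ x in ((cube (W.center Q) (8 * W.side Q)) \
                    (cube (W.center Q) (W.side Q))) ∩ Ω,
                  (∫⁻ ξ in cube (W.center Q) (W.side Q),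
                    ENNReal.ofReal (|f x - f ξ| ^ q / ‖x - ξ‖ ^ (s * q + d))) ^ (p / q)) := by
  refine ⟨(9 / 2) ^ ((s * q + d) * (p / q)), by positivity,
    fun CW _ Ω hΩ _ _ ι W f hf => ?_⟩
  rw [← ENNReal.tsum_add, ← ENNReal.tsum_mul_left]
  refine ENNReal.tsum_le_tsum fun i => setLIntegral_inter_le_mul_add ENNReal.ofReal_ne_top
    (Metric.isClosed_closedBall.measurableSet.inter hΩ.measurableSet) fun x hx => ?_
  exact ofReal_sub_setAverage_rpow_div_le_lintegral_rpow (by linarith) hq hs0.le (W.side_pos i)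
    (W.integrableOn_cube hf i) hx

/-- local approximation by means on Whitney cubes. With `f_Q` the mean of
`f` on `Q`, `∑_Q ∫_{8Q∩Ω} |f-f_Q|^p/ℓ(Q)^{sp} ≤ C (∑_Q ∫_Q (∫_Q ...)^{p/q} +
∑_Q ∫_{(8Q∖Q)∩Ω} (∫_Q ...)^{p/q})`. -/
theorem stmt14 (d : ℕ) (hd : 0 < d) (p q s : ℝ) (hp1 : 1 < p) (hq : 1 ≤ q)
    (hs0 : 0 < s) (hs1 : s < 1) :
    ∃ C : ℝ, 0 < C ∧
      ∀ (CW : ℝ), 1 ≤ CW →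
      ∀ (Ω : Set (Fin d → ℝ)), IsOpen Ω → Bornology.IsBounded Ω → Ω ≠ Set.univ →
      ∀ (ι : Type) (W : Whitney d Ω CW ι)
        (f : (Fin d → ℝ) → ℝ), MeasureTheory.LocallyIntegrableOn f Ω volume →
        (∑' Q : ι, ∫⁻ x in (cube (W.center Q) (8 * W.side Q)) ∩ Ω,
            ENNReal.ofReal
              (|f x - ⨍ ξ in cube (W.center Q) (W.side Q), f ξ| ^ p / W.side Q ^ (s * p)))
          ≤ ENNReal.ofReal C *
            ((∑' Q : ι, ∫⁻ x in cube (W.center Q) (W.side Q),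
                (∫⁻ ξ in cube (W.center Q) (W.side Q),
                  ENNReal.ofReal (|f x - f ξ| ^ q / ‖x - ξ‖ ^ (s * q + d))) ^ (p / q))
              + ∑' Q : ι, ∫⁻ x in ((cube (W.center Q) (8 * W.side Q)) \
                    (cube (W.center Q) (W.side Q))) ∩ Ω,
                  (∫⁻ ξ in cube (W.center Q) (W.side Q),
                    ENNReal.ofReal (|f x - f ξ| ^ q / ‖x - ξ‖ ^ (s * q + d))) ^ (p / q)) :=
  stmt14_general d p q s hp1 hq hs0
end
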